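/- Perturbation claim: for any f : D → ℝ there exists f' : D → ℝ such that f and f' have exactly the same set of violated pairs (pairs with positive weight), the distance to the (α,β)-Lipschitz property is the same for f and f', and w_{f'}(x,y) ≠ 0 for all distinct x,y ∈ D. -/

import Mathlib

/-!
Write `s_f(x, y) = f x - f y - fd x y`. A function `g` is `(α, β)`-Lipschitz iff `s_g ≤ 0` on
all pairs: `fd x y` is exactly the bound that the unit-step conditions give for `g x - g y`
along a monotone path from `y` down to `x ⊓ y` and then up to `x`. Because `fd` satisfies the
triangle inequality, any `f` with `s_f ≤ 0` on a set `A` extends from `A` to a Lipschitz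
function (McShane), so the distance to the property only depends on which pairs have
`s_f ≤ 0`.

The triangle inequality and `fd x y + fd y x > 0` for `x ≠ y` make the relation
`s_f(x, y) ≥ 0` transitive and asymmetric on distinct points, so then `x` has strictly fewer
such predecessors than `y`. Adding `ε` times this count to `f`, with `ε · |D|` below every
nonzero `|s_f|`, makes every tight pair slack and changes no other sign.
-/

noncomputable def fd {n k : ℕ} (α β : ℝ) (x y : Fin n → Fin k) : ℝ :=
  β * ∑ i, (((x i : ℕ) : ℝ) - ((min (x i) (y i) : Fin k) : ℕ)) -
  α * ∑ i, (((y i : ℕ) : ℝ) - ((min (x i) (y i) : Fin k) : ℕ))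

noncomputable def vw {n k : ℕ} (α β : ℝ) (g : (Fin n → Fin k) → ℝ)
    (x y : Fin n → Fin k) : ℝ :=
  max (g x - g y - fd α β x y) (g y - g x - fd α β y x)

def IsABLip {n k : ℕ} (α β : ℝ) (g : (Fin n → Fin k) → ℝ) : Prop :=
  ∀ x y : Fin n → Fin k,
    (∃ i, (y i : ℕ) = (x i : ℕ) + 1 ∧ ∀ j, j ≠ i → y j = x j) →
      α ≤ g y - g x ∧ g y - g x ≤ β

open Filter Topology

theorem exists_pos_mul_lt_abs {ι : Type*} [Finite ι] (r : ι → ℝ) (M : ℝ) :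
    ∃ ε > 0, ∀ i, r i ≠ 0 → ε * M < |r i| := by
  have hsmall : ∀ i, ∀ᶠ ε in 𝓝[>] (0 : ℝ), r i ≠ 0 → ε * M < |r i| := fun i => by
    by_cases hi : r i = 0
    · exact .of_forall fun _ h => absurd hi h
    · have hlim : Tendsto (fun ε : ℝ => ε * M) (𝓝[>] 0) (𝓝 0) := by
        simpa using ((continuous_mul_const M).tendsto 0).mono_left nhdsWithin_le_nhds
      exact (hlim.eventually_lt_const (abs_pos.2 hi)).mono fun _ h _ => h
  exact ((eventually_all.2 hsmall).and self_mem_nhdsWithin).exists.imp fun _ h => ⟨h.2, h.1⟩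

section Lipschitz

variable {X : Type*} (d : X → X → ℝ)

noncomputable def lipschitzDist (f : X → ℝ) : ℕ :=
  sInf {m | ∃ g : X → ℝ, (∀ x y, g x - g y ≤ d x y) ∧ Nat.card {x // f x ≠ g x} = m}

noncomputable def weakViolatorCount (f : X → ℝ) (y : X) : ℕ :=
  {z | z ≠ y ∧ d z y ≤ f z - f y}.ncard

variable {d}

theorem exists_lipschitz_extension (hd_self : ∀ x, d x x = 0)
    (hd_tri : ∀ x y z, d x z ≤ d x y + d y z) (f : X → ℝ) (A : Finset X)
    (hA : ∀ x ∈ A, ∀ y ∈ A, f x - f y ≤ d x y) :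
    ∃ g : X → ℝ, (∀ x y, g x - g y ≤ d x y) ∧ ∀ x ∈ A, g x = f x := by
  rcases A.eq_empty_or_nonempty with rfl | hne
  · rcases isEmpty_or_nonempty X with hX | ⟨⟨x₀⟩⟩
    · exact ⟨0, fun x => isEmptyElim x, by simp⟩
    · exact ⟨fun x => d x x₀, fun x y => by linarith [hd_tri x y x₀], by simp⟩
  -- McShane's extension
  refine ⟨fun x => A.inf' hne fun z => f z + d x z, fun x y => ?_, fun x hx => ?_⟩
  · obtain ⟨z, hz, hmin⟩ := A.exists_mem_eq_inf' hne fun z => f z + d y z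
    have := A.inf'_le (fun z => f z + d x z) hz
    simp only [hmin]
    linarith [hd_tri x y z]
  · refine le_antisymm ?_ (A.le_inf' hne _ fun z hz => ?_)
    · have := A.inf'_le (fun z => f z + d x z) hx
      rwa [hd_self, add_zero] at this
    · linarith [hA x hx z hz]

theorem lipschitzDist_le_of_forall_imp [Finite X] (hd_self : ∀ x, d x x = 0)
    (hd_tri : ∀ x y z, d x z ≤ d x y + d y z) {f₁ f₂ : X → ℝ}
    (h : ∀ x y, f₂ x - f₂ y ≤ d x y → f₁ x - f₁ y ≤ d x y) :
    lipschitzDist d f₁ ≤ lipschitzDist d f₂ := by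
  obtain ⟨g₀, hg₀, -⟩ := exists_lipschitz_extension hd_self hd_tri f₂ ∅ (by simp)
  obtain ⟨g₂, hg₂, hm⟩ := Nat.sInf_mem (⟨_, g₀, hg₀, rfl⟩ :
    {m | ∃ g : X → ℝ, (∀ x y, g x - g y ≤ d x y) ∧ Nat.card {x // f₂ x ≠ g x} = m}.Nonempty)
  obtain ⟨g₁, hg₁, hext⟩ := exists_lipschitz_extension hd_self hd_tri f₁
    (Set.toFinite {x | f₂ x = g₂ x}).toFinset fun x hx y hy => h x y <| by
      simp only [Set.Finite.mem_toFinset, Set.mem_ofPred_eq] at hx hy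
      rw [hx, hy]; exact hg₂ x y
  calc lipschitzDist d f₁ ≤ Nat.card {x // f₁ x ≠ g₁ x} := Nat.sInf_le ⟨g₁, hg₁, rfl⟩
    _ ≤ Nat.card {x // f₂ x ≠ g₂ x} :=
      Nat.card_mono (Set.toFinite _) fun x hx hx₂ => hx (hext x (by simpa using hx₂)).symm
    _ = lipschitzDist d f₂ := hm

theorem lipschitzDist_congr [Finite X] (hd_self : ∀ x, d x x = 0)
    (hd_tri : ∀ x y z, d x z ≤ d x y + d y z) {f₁ f₂ : X → ℝ}
    (h : ∀ x y, f₁ x - f₁ y ≤ d x y ↔ f₂ x - f₂ y ≤ d x y) :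
    lipschitzDist d f₁ = lipschitzDist d f₂ :=
  le_antisymm (lipschitzDist_le_of_forall_imp hd_self hd_tri fun x y => (h x y).2)
    (lipschitzDist_le_of_forall_imp hd_self hd_tri fun x y => (h x y).1)

theorem weakViolatorCount_lt [Finite X] (hd_tri : ∀ x y z, d x z ≤ d x y + d y z)
    (hd_pos : ∀ x y, x ≠ y → 0 < d x y + d y x) {f : X → ℝ} {x y : X} (hxy : x ≠ y)
    (h : d x y ≤ f x - f y) : weakViolatorCount d f x < weakViolatorCount d f y := by
  refine Set.ncard_lt_ncard (Set.ssubset_iff_of_subset ?_ |>.2 ⟨x, ⟨hxy, h⟩, fun hx => hx.1 rfl⟩)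
  rintro z ⟨-, hz⟩
  refine ⟨?_, by linarith [hd_tri z x y]⟩
  rintro rfl
  linarith [hd_pos x z hxy]

theorem exists_perturbation [Finite X] (hd_tri : ∀ x y z, d x z ≤ d x y + d y z)
    (hd_pos : ∀ x y, x ≠ y → 0 < d x y + d y x) (f : X → ℝ) :
    ∃ f' : X → ℝ, (∀ x y, f x - f y ≤ d x y ↔ f' x - f' y ≤ d x y) ∧
      ∀ x y, x ≠ y → f' x - f' y ≠ d x y := by
  set c : X → ℝ := fun x => weakViolatorCount d f x
  obtain ⟨ε, hε, hsmall⟩ :=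
    exists_pos_mul_lt_abs (fun p : X × X => f p.1 - f p.2 - d p.1 p.2) (Nat.card X)
  have hshift : ∀ x y, |ε * (c x - c y)| ≤ ε * Nat.card X := fun x y => by
    rw [abs_mul, abs_of_pos hε]
    gcongr
    exact abs_sub_le_of_nonneg_of_le (Nat.cast_nonneg _) (Nat.cast_le.2 (Set.ncard_le_card _))
      (Nat.cast_nonneg _) (Nat.cast_le.2 (Set.ncard_le_card _))
  -- the shift `ε * (c x - c y)` is too small to flip a nonzero sign, and makes tight pairs slack
  have hsign : ∀ x y, x ≠ y →
      (f x - f y ≤ d x y ∧ (f x + ε * c x) - (f y + ε * c y) < d x y) ∨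
      (d x y < f x - f y ∧ d x y < (f x + ε * c x) - (f y + ε * c y)) := fun x y hxy => by
    have hxy' := abs_le.1 (hshift x y)
    rcases lt_trichotomy (f x - f y - d x y) 0 with hneg | hzero | hpos
    · have := hsmall (x, y) hneg.ne
      rw [abs_of_neg hneg] at this
      left; constructor <;> linarith
    · have : c x < c y := Nat.cast_lt.2 (weakViolatorCount_lt hd_tri hd_pos hxy (by linarith))
      left; constructor <;> nlinarith
    · have := hsmall (x, y) hpos.ne'
      rw [abs_of_pos hpos] at this
      right; constructor <;> linarith
  refine ⟨fun x => f x + ε * c x, fun x y => ?_, fun x y hxy => ?_⟩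
  · rcases eq_or_ne x y with rfl | hxy
    · simp
    · rcases hsign x y hxy with h | h
      · exact iff_of_true h.1 h.2.le
      · exact iff_of_false h.1.not_ge h.2.not_ge
  · rcases hsign x y hxy with h | h
    · exact h.2.ne
    · exact h.2.ne'

end Lipschitz

variable {n k : ℕ}

theorem covBy_iff_exists_succ {x y : Fin n → Fin k} :
    x ⋖ y ↔ ∃ i, (y i : ℕ) = (x i : ℕ) + 1 ∧ ∀ j, j ≠ i → y j = x j := by
  simp only [Pi.covBy_iff, Fin.covBy_iff, Nat.covBy_iff_add_one_eq, eq_comm]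

noncomputable def coordSum (x : Fin n → Fin k) : ℝ := ∑ i, ((x i : ℕ) : ℝ)

theorem coordSum_of_covBy {x y : Fin n → Fin k} (h : x ⋖ y) : coordSum y = coordSum x + 1 := by
  obtain ⟨i, hi, hj⟩ := covBy_iff_exists_succ.1 h
  rw [coordSum, coordSum, ← Finset.add_sum_erase _ _ (Finset.mem_univ i),
    ← Finset.add_sum_erase _ _ (Finset.mem_univ i),
    Finset.sum_congr rfl fun j hj' => by rw [hj j (Finset.ne_of_mem_erase hj')], hi]
  push_cast; ring

theorem strictMono_coordSum : StrictMono (coordSum : (Fin n → Fin k) → ℝ) :=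
  (strictMono_iff_forall_covBy _).2 fun _ _ h => by rw [coordSum_of_covBy h]; linarith

theorem fd_eq_coordSum_inf (α β : ℝ) (x y : Fin n → Fin k) :
    fd α β x y = β * (coordSum x - coordSum (x ⊓ y)) - α * (coordSum y - coordSum (x ⊓ y)) := by
  simp only [fd, coordSum, Finset.sum_sub_distrib]
  rfl

theorem isABLip_iff_forall_covBy {α β : ℝ} {g : (Fin n → Fin k) → ℝ} :
    IsABLip α β g ↔ ∀ x y, x ⋖ y → α ≤ g y - g x ∧ g y - g x ≤ β := by
  simp only [IsABLip, covBy_iff_exists_succ]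

theorem isABLip_iff {α β : ℝ} {g : (Fin n → Fin k) → ℝ} :
    IsABLip α β g ↔ ∀ x y, g x - g y ≤ fd α β x y := by
  rw [isABLip_iff_forall_covBy]
  constructor
  · intro h x y
    have hlow : Monotone fun z => g z - α * coordSum z :=
      (monotone_iff_forall_covBy _).2 fun a b hab => by
        have := (h a b hab).1; rw [coordSum_of_covBy hab]; linarith
    have hup : Monotone fun z => β * coordSum z - g z :=
      (monotone_iff_forall_covBy _).2 fun a b hab => by
        have := (h a b hab).2; rw [coordSum_of_covBy hab]; linarith
    have h1 := hup (inf_le_left : x ⊓ y ≤ x)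
    have h2 := hlow (inf_le_right : x ⊓ y ≤ y)
    simp only at h1 h2
    rw [fd_eq_coordSum_inf]; linarith
  · intro h x y hxy
    have h1 := h x y
    have h2 := h y x
    rw [fd_eq_coordSum_inf, inf_eq_left.2 hxy.le, coordSum_of_covBy hxy] at h1
    rw [fd_eq_coordSum_inf, inf_eq_right.2 hxy.le, coordSum_of_covBy hxy] at h2
    constructor <;> linarith

theorem fd_self (α β : ℝ) (x : Fin n → Fin k) : fd α β x x = 0 := by
  simp [fd_eq_coordSum_inf]

theorem fd_add_fd_pos {α β : ℝ} (hαβ : α < β) {x y : Fin n → Fin k} (hxy : x ≠ y) :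
    0 < fd α β x y + fd α β y x := by
  have hlt : x ⊓ y < x ∨ x ⊓ y < y := by
    rcases (inf_le_left : x ⊓ y ≤ x).lt_or_eq with h | hx
    · exact .inl h
    · exact .inr (inf_le_right.lt_of_ne fun hy => hxy (hx.symm.trans hy))
  have hx := strictMono_coordSum.monotone (inf_le_left : x ⊓ y ≤ x)
  have hy := strictMono_coordSum.monotone (inf_le_right : x ⊓ y ≤ y)
  rw [fd_eq_coordSum_inf, fd_eq_coordSum_inf, inf_comm y x]
  rcases hlt with h | h <;> have := strictMono_coordSum h <;> nlinarith

theorem fd_eq_sum_max {α β : ℝ} (hαβ : α ≤ β) (x y : Fin n → Fin k) :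
    fd α β x y =
      ∑ i, max (α * ((x i : ℕ) - (y i : ℕ) : ℝ)) (β * ((x i : ℕ) - (y i : ℕ) : ℝ)) := by
  rw [fd, Finset.mul_sum, Finset.mul_sum, ← Finset.sum_sub_distrib]
  refine Finset.sum_congr rfl fun i _ => ?_
  rcases le_total (x i) (y i) with h | h
  · have h' : ((x i : ℕ) : ℝ) ≤ (y i : ℕ) := by exact_mod_cast h
    rw [min_eq_left h, max_eq_left (by nlinarith)]; ring
  · have h' : ((y i : ℕ) : ℝ) ≤ (x i : ℕ) := by exact_mod_cast h
    rw [min_eq_right h, max_eq_right (by nlinarith)]; ring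

theorem fd_triangle {α β : ℝ} (hαβ : α ≤ β) (x y z : Fin n → Fin k) :
    fd α β x z ≤ fd α β x y + fd α β y z := by
  simp only [fd_eq_sum_max hαβ, ← Finset.sum_add_distrib]
  refine Finset.sum_le_sum fun i _ =>
    (congrArg₂ max (by ring) (by ring)).trans_le max_add_add_le_max_add_max

/-- Perturbation: there is `f'` with the same violated pairs, the same
distance to the `(α,β)`-Lipschitz property, and no pair of weight exactly 0. -/
theorem perturbation {n k : ℕ} (α β : ℝ) (hαβ : α < β)
    (f : (Fin n → Fin k) → ℝ) :
    ∃ f' : (Fin n → Fin k) → ℝ,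
      (∀ x y, x ≠ y → (0 < vw α β f x y ↔ 0 < vw α β f' x y)) ∧
      sInf {m : ℕ | ∃ g : (Fin n → Fin k) → ℝ, IsABLip α β g ∧
          Nat.card {x : Fin n → Fin k // f x ≠ g x} = m} =
      sInf {m : ℕ | ∃ g : (Fin n → Fin k) → ℝ, IsABLip α β g ∧
          Nat.card {x : Fin n → Fin k // f' x ≠ g x} = m} ∧
      (∀ x y, x ≠ y → vw α β f' x y ≠ 0) := by
  obtain ⟨f', hsame, htight⟩ :=
    exists_perturbation (fd_triangle hαβ.le) (fun _ _ => fd_add_fd_pos hαβ) f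
  refine ⟨f', fun x y _ => ?_, ?_, fun x y hxy => ?_⟩
  · rw [← not_iff_not]
    simp only [vw, not_lt, max_le_iff, sub_nonpos, hsame]
  · simp_rw [isABLip_iff]
    exact lipschitzDist_congr (fd_self α β) (fd_triangle hαβ.le) hsame
  · rcases max_choice (f' x - f' y - fd α β x y) (f' y - f' x - fd α β y x) with h | h <;>
      rw [vw, h, sub_ne_zero]
    exacts [htight x y hxy, htight y x hxy.symm]
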